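/- arXiv:2405.11692 — 5 statements merged into one kernel-verified Lean document; each statement's English description precedes it below -/
import Mathlib

section
/- For integers $0 \le j \le n-1$ and real $\beta > 0$, one has $\Gamma_\beta^{n,2n-j} + \sum_{i=1}^{n-j} (-1)^i \binom{n+1-j}{i} \Gamma_\beta^{n-i+1,n} \Gamma_\beta^{n,2n-i-j} + (-1)^{n-j+1} \Gamma_\beta^{j,n} = 0$. -/
/-!
With `x = β + n`, the factor `Γ_β^{n-i+1,n}` is the falling factorial `x (x-1) ⋯ (x-i+1)` and
`Γ_β^{n,2n-i-j}` is the rising factorial of `x` of length `n+1-j-i`. Since a rising factorial of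
length `k` equals `(-1)^k` times the falling factorial of `-x`, the left-hand side is, up to the
sign `(-1)^(n+1-j)`, the Chu–Vandermonde expansion of the falling factorial of `x + (-x) = 0` of
length `n+1-j ≥ 1`, which vanishes.
-/

open Finset

/-- `Γ_β^{m,M} = ∏_{i=m}^{M} (β + i)`. -/
noncomputable def Gam (β : ℝ) (m M : ℕ) : ℝ := ∏ i ∈ Finset.Icc m M, (β + (i : ℝ))

open Polynomial

section Pochhammer

variable {R : Type*} [CommRing R]

theorem descPochhammer_smeval_eq_eval (r : R) (n : ℕ) :
    (descPochhammer ℤ n).smeval r = (descPochhammer R n).eval r := by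
  rw [descPochhammer_smeval_eq_ascPochhammer, ascPochhammer_smeval_eq_eval,
    descPochhammer_eval_eq_ascPochhammer]

theorem descPochhammer_eval_add (x y : R) (k : ℕ) :
    (descPochhammer R k).eval (x + y) = ∑ ij ∈ antidiagonal k,
      (k.choose ij.1 : R) * ((descPochhammer R ij.1).eval x * (descPochhammer R ij.2).eval y) := by
  simpa only [descPochhammer_smeval_eq_eval] using Ring.descPochhammer_smeval_add k (Commute.all x y)

theorem ascPochhammer_eval_eq_neg_one_pow_mul (x : R) (k : ℕ) :
    (ascPochhammer R k).eval x = (-1) ^ k * (descPochhammer R k).eval (-x) := by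
  simpa using ascPochhammer_eval_neg_eq_descPochhammer R (-x) k

theorem ascPochhammer_eval_eq_prod_range (r : R) (n : ℕ) :
    (ascPochhammer R n).eval r = ∏ k ∈ range n, (r + k) := by
  induction n with
  | zero => simp
  | succ n ih => rw [ascPochhammer_succ_eval, ih, prod_range_succ]

theorem sum_choose_mul_descPochhammer_mul_ascPochhammer_eq_zero (x : R) {M : ℕ} (hM : M ≠ 0) :
    ∑ i ∈ range (M + 1), (-1) ^ i * (M.choose i : R) * (descPochhammer R i).eval x
      * (ascPochhammer R (M - i)).eval x = 0 := by
  calc _ = (-1) ^ M * ∑ i ∈ range (M + 1), (M.choose i : R)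
          * ((descPochhammer R i).eval x * (descPochhammer R (M - i)).eval (-x)) := by
        rw [mul_sum]
        refine sum_congr rfl fun i hi => ?_
        have hsign : (-1 : R) ^ M = (-1) ^ i * (-1) ^ (M - i) := by
          rw [← pow_add, Nat.add_sub_cancel' (mem_range_succ_iff.mp hi)]
        rw [ascPochhammer_eval_eq_neg_one_pow_mul, hsign]
        ring
    _ = (-1) ^ M * (descPochhammer R M).eval (x + -x) := by
        rw [descPochhammer_eval_add, Nat.sum_antidiagonal_eq_sum_range_succ
          (fun i j => (M.choose i : R) * ((descPochhammer R i).eval x * (descPochhammer R j).eval (-x)))]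
    _ = 0 := by rw [add_neg_cancel, descPochhammer_ne_zero_eval_zero _ hM, mul_zero]

end Pochhammer

theorem Gam_eq_ascPochhammer_eval (β : ℝ) (a b : ℕ) :
    Gam β a b = (ascPochhammer ℝ (b + 1 - a)).eval (β + a) := by
  rw [Gam, ← Finset.Ico_add_one_right_eq_Icc, prod_Ico_eq_prod_range,
    ascPochhammer_eval_eq_prod_range]
  push_cast
  simp only [add_assoc]

theorem Gam_eq_descPochhammer_eval (β : ℝ) {a b : ℕ} (h : a ≤ b + 1) :
    Gam β a b = (descPochhammer ℝ (b + 1 - a)).eval (β + b) := by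
  rw [Gam_eq_ascPochhammer_eval, descPochhammer_eval_eq_ascPochhammer, Nat.cast_sub h]
  congr 1
  push_cast
  ring

theorem stmt0_general (n j : ℕ) (hj : j ≤ n - 1) (β : ℝ) :
    Gam β n (2 * n - j)
      + ∑ i ∈ Finset.Icc 1 (n - j), (-1 : ℝ) ^ i * ((n + 1 - j).choose i : ℝ)
          * Gam β (n - i + 1) n * Gam β n (2 * n - i - j)
      + (-1 : ℝ) ^ (n - j + 1) * Gam β j n = 0 := by
  obtain ⟨m, rfl⟩ : ∃ m, n = j + m := ⟨n - j, by omega⟩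
  have key := sum_choose_mul_descPochhammer_mul_ascPochhammer_eq_zero (β + (j + m : ℕ))
    (M := m + 1) (by omega)
  rw [sum_range_succ, range_eq_Ico, sum_eq_sum_Ico_succ_bot (by omega),
    Finset.Ico_add_one_right_eq_Icc] at key
  convert key using 2
  · congr 1
    · rw [Gam_eq_ascPochhammer_eval, show 2 * (j + m) - j + 1 - (j + m) = m + 1 by omega]
      simp
    · refine sum_congr (by congr 1; omega) fun i hi => ?_
      rw [mem_Icc] at hi
      rw [Gam_eq_descPochhammer_eval β (by omega), Gam_eq_ascPochhammer_eval,
        show j + m + 1 - j = m + 1 by omega, show j + m + 1 - (j + m - i + 1) = i by omega,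
        show 2 * (j + m) - i - j + 1 - (j + m) = m + 1 - i by omega]
  · rw [Gam_eq_descPochhammer_eval β (by omega)]
    simp [add_assoc]

theorem stmt0 (n j : ℕ) (hn : 1 ≤ n) (hj : j ≤ n - 1) (β : ℝ) (hβ : 0 < β) :
    Gam β n (2 * n - j)
      + ∑ i ∈ Finset.Icc 1 (n - j), (-1 : ℝ) ^ i * ((n + 1 - j).choose i : ℝ)
          * Gam β (n - i + 1) n * Gam β n (2 * n - i - j)
      + (-1 : ℝ) ^ (n - j + 1) * Gam β j n = 0 :=
  stmt0_general n j hj β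
end

section
/- Let $0 < p < \infty$, $\gamma > 1 + 2/p$, and for $w \in \mathbb{D}$ set $K_w^{[0]}(z) = (1-\bar{w}z)^{-\gamma}$ and $K_w^{[1]}(z) = z(1-\bar{w}z)^{-(\gamma+1)}$. Then there exists a constant $c > 0$ independent of $w$ such that for all complex numbers $\alpha_0, \alpha_1$ and all $w \in \mathbb{D}$: $\|\alpha_0 K_w^{[0]} + \alpha_1 K_w^{[1]}\|_p \ge c \left( |\alpha_0| (1-|w|^2)^{-(\gamma - 2/p)} + |\alpha_1| (1-|w|^2)^{-(\gamma + 1 - 2/p)} \right)$. -/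
open MeasureTheory Metric Complex Finset
open scoped ENNReal NNReal

/-- The normalized area measure `dA = dxdy/π` on the unit disc. -/
noncomputable def dA : Measure ℂ :=
  (ENNReal.ofReal Real.pi)⁻¹ • ((volume : Measure ℂ).restrict (ball (0 : ℂ) 1))

/-- The Bergman "norm" `‖f‖_p = (∫_𝔻 |f|^p dA)^{1/p}`, valued in `ℝ≥0∞`. -/
noncomputable def Bnorm (p : ℝ) (f : ℂ → ℂ) : ℝ≥0∞ :=
  (∫⁻ z, (‖f z‖₊ : ℝ≥0∞) ^ p ∂dA) ^ (1 / p)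

/-- Membership in the Bergman space `A^p`. -/
def MemAp (p : ℝ) (f : ℂ → ℂ) : Prop :=
  DifferentiableOn ℂ f (ball (0 : ℂ) 1) ∧ (∫⁻ z, (‖f z‖₊ : ℝ≥0∞) ^ p ∂dA) < ⊤

/-!
Where `1 - w̄z ≠ 0` the combination factors as `(1 - w̄z)^{-(γ+1)} (α₀ + βz)` with
`β = α₁ - α₀w̄`. On the disc `|z - w| < (1 - |w|²)/4` the modulus of the first factor is comparable
to `(1 - |w|²)^{-(γ+1)}`, and the affine factor stays above a fixed fraction of
`|α₀ + βw| + |β|(1 - |w|²)/4` off a quarter of that disc; this quantity dominates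
`|α₀|(1 - |w|²) + |α₁|`. Integrating `|f|^p` over the remaining set, of area `≍ (1 - |w|²)²`,
gives the bound.
-/

open ComplexConjugate

theorem mul_cpow_neg_add_mul_cpow_neg_add_one {x : ℂ} (hx : x ≠ 0) (γ a b : ℂ) :
    a * x ^ (-γ) + b * x ^ (-(γ + 1)) = x ^ (-(γ + 1)) * (a * x + b) := by
  rw [show -γ = -(γ + 1) + 1 by ring, cpow_add _ _ hx, cpow_one]
  ring

theorem norm_one_sub_conj_mul_sub_le (w z : ℂ) :
    ‖(1 - conj w * z) - ((1 - ‖w‖ ^ 2 : ℝ) : ℂ)‖ ≤ ‖w‖ * ‖z - w‖ := by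
  have h : (1 - conj w * z) - ((1 - ‖w‖ ^ 2 : ℝ) : ℂ) = -(conj w * (z - w)) := by
    push_cast
    rw [← conj_mul']
    ring
  rw [h, norm_neg, norm_mul, norm_conj]

section Disc

variable {w z : ℂ}

theorem ball_one_sub_sq_div_four_subset_ball (hw : ‖w‖ < 1) :
    ball w ((1 - ‖w‖ ^ 2) / 4) ⊆ ball 0 1 := by
  intro z hz
  rw [mem_ball, dist_eq] at hz
  rw [mem_ball_zero_iff]
  calc ‖z‖ ≤ ‖w‖ + ‖z - w‖ := by simpa using norm_add_le w (z - w)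
    _ < 1 := by nlinarith [sq_nonneg (1 - ‖w‖)]

theorem norm_one_sub_conj_mul_mem_Icc (hw : ‖w‖ < 1) (hz : z ∈ ball w ((1 - ‖w‖ ^ 2) / 4)) :
    ‖1 - conj w * z‖ ∈ Set.Icc (3 / 4 * (1 - ‖w‖ ^ 2)) (5 / 4 * (1 - ‖w‖ ^ 2)) := by
  rw [mem_ball, dist_eq] at hz
  have ht : 0 < 1 - ‖w‖ ^ 2 := by nlinarith [norm_nonneg w]
  have hdist : ‖(1 - conj w * z) - ((1 - ‖w‖ ^ 2 : ℝ) : ℂ)‖ ≤ (1 - ‖w‖ ^ 2) / 4 :=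
    (norm_one_sub_conj_mul_sub_le w z).trans
      (by nlinarith [mul_le_mul_of_nonneg_left hz.le (norm_nonneg w)])
  have hnorm : ‖((1 - ‖w‖ ^ 2 : ℝ) : ℂ)‖ = 1 - ‖w‖ ^ 2 := by
    rw [norm_real, Real.norm_of_nonneg ht.le]
  constructor
  · linarith [norm_sub_norm_le ((1 - ‖w‖ ^ 2 : ℝ) : ℂ) (1 - conj w * z),
      norm_sub_rev ((1 - ‖w‖ ^ 2 : ℝ) : ℂ) (1 - conj w * z)]
  · linarith [norm_sub_norm_le (1 - conj w * z) ((1 - ‖w‖ ^ 2 : ℝ) : ℂ)]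

end Disc

theorem ofReal_mul_rpow_le_bnorm {p : ℝ} (hp : 0 < p) {f : ℂ → ℂ} {E : Set ℂ}
    (hE : MeasurableSet E) (hE₁ : E ⊆ ball 0 1) {q V : ℝ} (hq : 0 ≤ q) (hV : 0 ≤ V)
    (hvol : ENNReal.ofReal (V * Real.pi) ≤ volume E) (hf : ∀ z ∈ E, q ≤ ‖f z‖) :
    ENNReal.ofReal (q * V ^ (1 / p)) ≤ Bnorm p f := by
  have hdA : ENNReal.ofReal V ≤ dA E := by
    rw [dA, Measure.smul_apply, Measure.restrict_apply hE, Set.inter_eq_self_of_subset_left hE₁,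
      smul_eq_mul, ← ENNReal.div_eq_inv_mul,
      ENNReal.le_div_iff_mul_le (by simp [Real.pi_pos]) (by simp), ← ENNReal.ofReal_mul hV]
    exact hvol
  have hint : ENNReal.ofReal q ^ p * ENNReal.ofReal V ≤ ∫⁻ z, (‖f z‖₊ : ℝ≥0∞) ^ p ∂dA :=
    calc ENNReal.ofReal q ^ p * ENNReal.ofReal V
        ≤ ∫⁻ _ in E, ENNReal.ofReal q ^ p ∂dA := by
          rw [setLIntegral_const]; gcongr
      _ ≤ ∫⁻ z in E, (‖f z‖₊ : ℝ≥0∞) ^ p ∂dA := by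
          refine setLIntegral_mono' hE fun z hz => ENNReal.rpow_le_rpow ?_ hp.le
          rw [← ENNReal.ofReal_coe_nnreal, coe_nnnorm]
          exact ENNReal.ofReal_le_ofReal (hf z hz)
      _ ≤ _ := setLIntegral_le_lintegral _ _
  calc ENNReal.ofReal (q * V ^ (1 / p))
      = (ENNReal.ofReal q ^ p * ENNReal.ofReal V) ^ (1 / p) := by
        rw [ENNReal.mul_rpow_of_nonneg _ _ (by positivity), ← ENNReal.rpow_mul,
          mul_one_div_cancel hp.ne', ENNReal.rpow_one,
          ENNReal.ofReal_rpow_of_nonneg hV (by positivity),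
          ENNReal.ofReal_mul hq]
    _ ≤ Bnorm p f := ENNReal.rpow_le_rpow hint (by positivity)

theorem volume_ball_eq_ofReal (ζ : ℂ) {r : ℝ} (hr : 0 ≤ r) :
    volume (ball ζ r) = ENNReal.ofReal (r ^ 2 * Real.pi) := by
  rw [Complex.volume_ball, ENNReal.ofReal_mul (by positivity), ENNReal.ofReal_pow hr,
    ← NNReal.coe_real_pi, ENNReal.ofReal_coe_nnreal]

theorem ofReal_le_volume_ball_inter_le_norm_affine (a b w : ℂ) {ρ : ℝ} (hρ : 0 < ρ) :
    ENNReal.ofReal (3 / 4 * ρ ^ 2 * Real.pi) ≤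
      volume (ball w ρ ∩ {z | (‖a + b * w‖ + ‖b‖ * ρ) / 6 ≤ ‖a + b * z‖}) := by
  -- Either `a + b z` is large on all of `ball w ρ`, or its small values lie in `ball (-a/b) (ρ/2)`.
  rcases le_or_gt (2 * (‖b‖ * ρ)) ‖a + b * w‖ with hlarge | hsmall
  · have hsub : ball w ρ ⊆ ball w ρ ∩ {z | (‖a + b * w‖ + ‖b‖ * ρ) / 6 ≤ ‖a + b * z‖} := by
      intro z hz
      refine ⟨hz, ?_⟩
      rw [mem_ball, dist_eq] at hz
      have htri : ‖a + b * w‖ ≤ ‖a + b * z‖ + ‖b‖ * ‖z - w‖ := by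
        calc ‖a + b * w‖ = ‖(a + b * z) + b * (w - z)‖ := by ring_nf
          _ ≤ ‖a + b * z‖ + ‖b‖ * ‖z - w‖ := by
            rw [← norm_mul, ← norm_neg (b * (z - w))]
            convert norm_add_le _ _ using 3
            ring
      rw [Set.mem_ofPred_eq]
      nlinarith [mul_le_mul_of_nonneg_left hz.le (norm_nonneg b)]
    calc ENNReal.ofReal (3 / 4 * ρ ^ 2 * Real.pi)
        ≤ ENNReal.ofReal (ρ ^ 2 * Real.pi) := ENNReal.ofReal_le_ofReal (by nlinarith [Real.pi_pos])
      _ = volume (ball w ρ) := (volume_ball_eq_ofReal w hρ.le).symm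
      _ ≤ _ := measure_mono hsub
  · have hb : b ≠ 0 := by
      rintro rfl
      simp only [norm_zero, zero_mul, mul_zero] at hsmall
      exact (norm_nonneg _).not_gt hsmall
    have hsub : ball w ρ \ ball (-a / b) (ρ / 2) ⊆
        ball w ρ ∩ {z | (‖a + b * w‖ + ‖b‖ * ρ) / 6 ≤ ‖a + b * z‖} := by
      rintro z ⟨hz, hfar⟩
      refine ⟨hz, ?_⟩
      rw [mem_ball, dist_eq, not_lt] at hfar
      have : a + b * z = b * (z - -a / b) := by field_simp; ring
      rw [Set.mem_ofPred_eq, this, norm_mul]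
      nlinarith [norm_nonneg b]
    calc ENNReal.ofReal (3 / 4 * ρ ^ 2 * Real.pi)
        = ENNReal.ofReal (ρ ^ 2 * Real.pi) - ENNReal.ofReal ((ρ / 2) ^ 2 * Real.pi) := by
          rw [← ENNReal.ofReal_sub _ (by positivity)]
          ring_nf
      _ = volume (ball w ρ) - volume (ball (-a / b) (ρ / 2)) := by
          rw [volume_ball_eq_ofReal _ hρ.le, volume_ball_eq_ofReal _ (by positivity)]
      _ ≤ volume (ball w ρ \ ball (-a / b) (ρ / 2)) := le_measure_sdiff
      _ ≤ _ := measure_mono hsub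

theorem norm_kernel_combination_ge {γ : ℝ} (hγ : 0 ≤ γ + 1) (α₀ α₁ : ℂ) {w z : ℂ}
    (hw : ‖w‖ < 1) (hz : z ∈ ball w ((1 - ‖w‖ ^ 2) / 4)) :
    (5 / 4 * (1 - ‖w‖ ^ 2)) ^ (-(γ + 1)) * ‖α₀ + (α₁ - α₀ * conj w) * z‖ ≤
      ‖α₀ * (1 - conj w * z) ^ (-(γ : ℂ)) + α₁ * (z * (1 - conj w * z) ^ (-((γ : ℂ) + 1)))‖ := by
  obtain ⟨hlow, hup⟩ := norm_one_sub_conj_mul_mem_Icc hw hz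
  have hpos : 0 < ‖1 - conj w * z‖ :=
    lt_of_lt_of_le (by nlinarith [norm_nonneg w]) hlow
  rw [← mul_assoc α₁, mul_cpow_neg_add_mul_cpow_neg_add_one (norm_pos_iff.mp hpos),
    show α₀ * (1 - conj w * z) + α₁ * z = α₀ + (α₁ - α₀ * conj w) * z by ring, norm_mul,
    show -((γ : ℂ) + 1) = ((-(γ + 1) : ℝ) : ℂ) by push_cast; ring, norm_cpow_real]
  exact mul_le_mul_of_nonneg_right (Real.rpow_le_rpow_of_nonpos hpos hup (by linarith))
    (norm_nonneg _)

theorem norm_mul_one_sub_sq_add_norm_le (α₀ α₁ : ℂ) {w : ℂ} (hw : ‖w‖ ≤ 1) :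
    ‖α₀‖ * (1 - ‖w‖ ^ 2) + ‖α₁‖ ≤
      2 * (‖α₀ + (α₁ - α₀ * conj w) * w‖ + ‖α₁ - α₀ * conj w‖ * (1 - ‖w‖ ^ 2)) := by
  set β := α₁ - α₀ * conj w
  set u := α₀ + β * w
  have ht : 0 ≤ 1 - ‖w‖ ^ 2 := by nlinarith [norm_nonneg w]
  have h₀ : ‖α₀‖ ≤ ‖u‖ + ‖β‖ * ‖w‖ := by
    have e : α₀ = u - β * w := by simp only [u]; ring
    rw [← norm_mul, e]
    exact norm_sub_le _ _
  have h₁ : ‖α₁‖ ≤ ‖β‖ * (1 - ‖w‖ ^ 2) + ‖u‖ * ‖w‖ := by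
    have e : α₁ = β * ((1 - ‖w‖ ^ 2 : ℝ) : ℂ) + u * conj w := by
      push_cast
      rw [← conj_mul']
      simp only [u, β]
      ring
    rw [e]
    refine (norm_add_le _ _).trans_eq ?_
    rw [norm_mul, norm_mul, norm_real, Real.norm_of_nonneg ht, norm_conj]
  nlinarith [mul_le_mul_of_nonneg_right h₀ ht, mul_nonneg (norm_nonneg u) (sq_nonneg ‖w‖),
    mul_nonneg (mul_nonneg (norm_nonneg β) (sub_nonneg.mpr hw)) ht,
    mul_nonneg (norm_nonneg u) (sub_nonneg.mpr hw)]

theorem mul_rpow_mul_mul_sq_rpow {a b t : ℝ} (ha : 0 ≤ a) (hb : 0 ≤ b) (ht : 0 < t) (x y : ℝ) :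
    (a * t) ^ x * (b * t ^ 2) ^ y = a ^ x * b ^ y * t ^ (x + 2 * y) := by
  rw [Real.mul_rpow ha ht.le, Real.mul_rpow hb (by positivity), ← Real.rpow_natCast,
    ← Real.rpow_mul ht.le, Real.rpow_add ht]
  push_cast
  ring

theorem mul_add_rpow_le_of_mul_add_le {p γ t a₀ a₁ m : ℝ} (ht : 0 < t)
    (h : a₀ * t + a₁ ≤ 48 * m) :
    (5 / 4 : ℝ) ^ (-(γ + 1)) * (3 / 64 : ℝ) ^ (1 / p) / 48 *
        (a₀ * t ^ (-(γ - 2 / p)) + a₁ * t ^ (-(γ + 1 - 2 / p))) ≤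
      (5 / 4 * t) ^ (-(γ + 1)) * m * (3 / 4 * (t / 4) ^ 2) ^ (1 / p) := by
  set c := (5 / 4 : ℝ) ^ (-(γ + 1)) * (3 / 64 : ℝ) ^ (1 / p) / 48
  have hscale := mul_rpow_mul_mul_sq_rpow (by norm_num : (0 : ℝ) ≤ 5 / 4)
    (by norm_num : (0 : ℝ) ≤ 3 / 64) ht (-(γ + 1)) (1 / p)
  rw [show 3 / 4 * (t / 4) ^ 2 = 3 / 64 * t ^ 2 by ring, mul_right_comm, hscale,
    show -(γ - 2 / p) = -(γ + 1) + 2 * (1 / p) + 1 by ring,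
    show -(γ + 1 - 2 / p) = -(γ + 1) + 2 * (1 / p) by ring, Real.rpow_add ht, Real.rpow_one]
  calc c * (a₀ * (t ^ (-(γ + 1) + 2 * (1 / p)) * t) + a₁ * t ^ (-(γ + 1) + 2 * (1 / p)))
      = c * t ^ (-(γ + 1) + 2 * (1 / p)) * (a₀ * t + a₁) := by ring
    _ ≤ c * t ^ (-(γ + 1) + 2 * (1 / p)) * (48 * m) := by gcongr
    _ = _ := by ring

theorem stmt4 (p γ : ℝ) (hp : 0 < p) (hγ : 1 + 2 / p < γ) :
    ∃ c : ℝ, 0 < c ∧ ∀ (α₀ α₁ : ℂ), ∀ w ∈ ball (0 : ℂ) 1,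
      ENNReal.ofReal (c * (‖α₀‖ * (1 - ‖w‖ ^ 2) ^ (-(γ - 2 / p))
          + ‖α₁‖ * (1 - ‖w‖ ^ 2) ^ (-(γ + 1 - 2 / p))))
        ≤ Bnorm p (fun z =>
            α₀ * ((1 - (starRingEnd ℂ) w * z) ^ (-(γ : ℂ)))
            + α₁ * (z * (1 - (starRingEnd ℂ) w * z) ^ (-((γ : ℂ) + 1)))) := by
  refine ⟨(5 / 4 : ℝ) ^ (-(γ + 1)) * (3 / 64 : ℝ) ^ (1 / p) / 48, by positivity,
    fun α₀ α₁ w hw => ?_⟩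
  rw [mem_ball_zero_iff] at hw
  have hγ₁ : 0 ≤ γ + 1 := by linarith [show 0 < 2 / p by positivity]
  set t := 1 - ‖w‖ ^ 2
  have ht : 0 < t := by nlinarith [norm_nonneg w]
  set β := α₁ - α₀ * conj w
  set m := (‖α₀ + β * w‖ + ‖β‖ * (t / 4)) / 6
  set E := ball w (t / 4) ∩ {z | m ≤ ‖α₀ + β * z‖}
  have hE : MeasurableSet E :=
    measurableSet_ball.inter (measurableSet_le measurable_const (by fun_prop))
  have hS : ‖α₀‖ * t + ‖α₁‖ ≤ 48 * m := by
    have h : ‖α₀‖ * t + ‖α₁‖ ≤ 2 * (‖α₀ + β * w‖ + ‖β‖ * t) :=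
      norm_mul_one_sub_sq_add_norm_le α₀ α₁ hw.le
    simp only [m]
    linarith [norm_nonneg (α₀ + β * w)]
  have hf : ∀ z ∈ E, (5 / 4 * t) ^ (-(γ + 1)) * m ≤
      ‖α₀ * (1 - conj w * z) ^ (-(γ : ℂ)) + α₁ * (z * (1 - conj w * z) ^ (-((γ : ℂ) + 1)))‖ :=
    fun z hz => (mul_le_mul_of_nonneg_left hz.2 (by positivity)).trans
      (norm_kernel_combination_ge hγ₁ α₀ α₁ hw hz.1)
  refine (ENNReal.ofReal_le_ofReal ?_).trans (ofReal_mul_rpow_le_bnorm hp hE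
    ((Set.inter_subset_left).trans (ball_one_sub_sq_div_four_subset_ball hw)) (by positivity)
    (by positivity) (ofReal_le_volume_ball_inter_le_norm_affine α₀ β w (by positivity)) hf)
  exact mul_add_rpow_le_of_mul_add_le ht hS
end

section
/- For $w \in \mathbb{D}$, $\beta > 0$, an integer $n \ge 0$, and $f$ holomorphic on $\mathbb{D}$, define $F_w(z) = f(z)(1-\bar{w}z)^{-(\beta+n)}$. Then $(1-|w|^2)^{n+1}\left(F_w^{(n+1)}(w) - \frac{f^{(n+1)}(w)}{(1-|w|^2)^{\beta+n}}\right) + \sum_{i=0}^{n} (-1)^{i+1} \binom{n+1}{i+1} \Gamma_\beta^{n-i,n} \, \bar{w}^{\,i+1} F_w^{(n-i)}(w) (1-|w|^2)^{n-i} = 0$. -/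
open MeasureTheory Metric Complex Finset

/-!
Since `f z = (1 - w̄ z) ^ (β + n) * F_w z` near `w`, Leibniz's rule expresses `f^{(n+1)}(w)`
through the `F_w^{(n+1-k)}(w)`, the `k`-th derivative of `(1 - w̄ z) ^ b` being
`(-w̄) ^ k · b (b - 1) ⋯ (b - k + 1) · (1 - w̄ z) ^ (b - k)`. At `z = w` we have
`1 - w̄ w = 1 - |w|²`, and for `b = β + n` the falling factorial of length `i + 1` is
`Γ_β^{n-i,n}`. Dividing by `(1 - |w|²) ^ (β + n)`, the `k = 0` term is `F_w^{(n+1)}(w)` and the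
others are the terms of the sum.
-/

open scoped ComplexConjugate Topology

theorem ofReal_Gam_sub_eq_descPochhammer_eval (β : ℝ) {i n : ℕ} (hi : i ≤ n) :
    (Gam β (n - i) n : ℂ) = (descPochhammer ℂ (i + 1)).eval (β + n : ℂ) := by
  rw [Gam, ofReal_prod, descPochhammer_eval_eq_prod_range, ← Finset.Ico_add_one_right_eq_Icc,
    prod_Ico_eq_prod_range, ← prod_range_reflect]
  refine prod_congr (by congr 1; omega) fun j hj => ?_
  have hji : j ≤ i := Nat.lt_succ_iff.mp (mem_range.mp hj)
  rw [show n - i + (n + 1 - (n - i) - 1 - j) = n - j by omega]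
  push_cast [Nat.cast_sub (hji.trans hi)]
  ring

theorem iteratedDeriv_one_sub_mul_cpow {c z : ℂ} (hz : 1 - c * z ∈ slitPlane) (b : ℂ) (k : ℕ) :
    iteratedDeriv k (fun z => (1 - c * z) ^ b) z
      = (-c) ^ k * (descPochhammer ℂ k).eval b * (1 - c * z) ^ (b - k) := by
  have hU : IsOpen {z | 1 - c * z ∈ slitPlane} := isOpen_slitPlane.preimage (by fun_prop)
  induction k generalizing z with
  | zero => simp
  | succ k ih =>
    have hev := Filter.eventually_of_mem (hU.mem_nhds hz) fun z hz => ih hz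
    have hlin : HasDerivAt (fun z => 1 - c * z) (-c) z := by
      simpa using ((hasDerivAt_id z).const_mul c).const_sub 1
    rw [iteratedDeriv_succ, Filter.EventuallyEq.deriv_eq hev,
      ((hlin.cpow_const hz).const_mul ((-c) ^ k * (descPochhammer ℂ k).eval b)).deriv,
      descPochhammer_succ_right, Polynomial.eval_mul]
    simp only [Polynomial.eval_sub, Polynomial.eval_X, Polynomial.eval_natCast, Nat.cast_succ]
    ring_nf

theorem iteratedDeriv_one_sub_mul_cpow_mul {c z : ℂ} (hz : 1 - c * z ∈ slitPlane) (b : ℂ)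
    {m : ℕ} {F : ℂ → ℂ} (hF : ContDiffAt ℂ m F z) :
    iteratedDeriv m (fun z => (1 - c * z) ^ b * F z) z
      = ∑ k ∈ range (m + 1), m.choose k *
          ((-c) ^ k * (descPochhammer ℂ k).eval b * (1 - c * z) ^ (b - k))
          * iteratedDeriv (m - k) F z := by
  have hpow : AnalyticAt ℂ (fun z => (1 - c * z) ^ b) z :=
    (analyticAt_const.sub (analyticAt_const.mul analyticAt_id)).cpow analyticAt_const hz
  simp only [iteratedDeriv_fun_mul hpow.contDiffAt hF, iteratedDeriv_one_sub_mul_cpow hz]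

theorem one_sub_conj_mul_mem_slitPlane {w z : ℂ} (hw : w ∈ ball (0 : ℂ) 1)
    (hz : z ∈ ball (0 : ℂ) 1) : 1 - conj w * z ∈ slitPlane := by
  rw [mem_ball_zero_iff] at hw hz
  rw [sub_eq_add_neg]
  apply mem_slitPlane_of_norm_lt_one
  rw [norm_neg, norm_mul, norm_conj]
  exact mul_lt_one_of_nonneg_of_lt_one_left (norm_nonneg w) hw hz.le

theorem ofReal_one_sub_norm_sq (w : ℂ) : ((1 - ‖w‖ ^ 2 : ℝ) : ℂ) = 1 - conj w * w := by
  rw [mul_comm, mul_conj, normSq_eq_norm_sq]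
  push_cast
  ring

theorem ofReal_one_sub_norm_sq_rpow {w : ℂ} (hw : w ∈ ball (0 : ℂ) 1) (s : ℝ) :
    (((1 - ‖w‖ ^ 2) ^ s : ℝ) : ℂ) = (1 - conj w * w) ^ (s : ℂ) := by
  have : 0 ≤ 1 - ‖w‖ ^ 2 := by nlinarith [norm_nonneg w, mem_ball_zero_iff.mp hw]
  rw [ofReal_cpow this, ofReal_one_sub_norm_sq]

theorem DifferentiableOn.mul_one_sub_conj_mul_cpow {f : ℂ → ℂ}
    (hf : DifferentiableOn ℂ f (ball (0 : ℂ) 1)) {w : ℂ} (hw : w ∈ ball (0 : ℂ) 1) (b : ℂ) :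
    DifferentiableOn ℂ (fun z => f z * (1 - conj w * z) ^ b) (ball (0 : ℂ) 1) := by
  refine hf.mul fun z hz => ?_
  have hlin : DifferentiableAt ℂ (fun z => 1 - conj w * z) z := by fun_prop
  exact (hlin.cpow (differentiableAt_const b)
    (one_sub_conj_mul_mem_slitPlane hw hz)).differentiableWithinAt

theorem one_sub_conj_mul_cpow_mul_eventuallyEq (f : ℂ → ℂ) {w : ℂ} (hw : w ∈ ball (0 : ℂ) 1)
    (b : ℂ) : (fun z => (1 - conj w * z) ^ b * (f z * (1 - conj w * z) ^ (-b))) =ᶠ[𝓝 w] f := by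
  filter_upwards [isOpen_ball.mem_nhds hw] with z hz
  rw [mul_left_comm, ← cpow_add _ _ (slitPlane_ne_zero (one_sub_conj_mul_mem_slitPlane hw hz)),
    add_neg_cancel, cpow_zero, mul_one]

theorem stmt5_general (β : ℝ) (n : ℕ) (f : ℂ → ℂ)
    (hf : DifferentiableOn ℂ f (ball (0 : ℂ) 1)) (w : ℂ) (hw : w ∈ ball (0 : ℂ) 1)
    (F : ℂ → ℂ)
    (hF : F = fun z => f z * (1 - (starRingEnd ℂ) w * z) ^ (-((β : ℂ) + (n : ℂ)))) :
    (((1 - ‖w‖ ^ 2) ^ (n + 1) : ℝ) : ℂ) *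
        (iteratedDeriv (n + 1) F w
          - iteratedDeriv (n + 1) f w / (((1 - ‖w‖ ^ 2) ^ (β + (n : ℝ)) : ℝ) : ℂ))
      + ∑ i ∈ Finset.range (n + 1),
          (-1 : ℂ) ^ (i + 1) * ((n + 1).choose (i + 1) : ℂ) * ((Gam β (n - i) n : ℝ) : ℂ)
            * ((starRingEnd ℂ) w) ^ (i + 1) * iteratedDeriv (n - i) F w
            * (((1 - ‖w‖ ^ 2) ^ (n - i) : ℝ) : ℂ) = 0 := by
  set a : ℂ := β + n with ha
  set T := 1 - conj w * w with hT
  have hTw : T ∈ slitPlane := one_sub_conj_mul_mem_slitPlane hw hw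
  have hT0 : T ≠ 0 := slitPlane_ne_zero hTw
  have hTa0 : T ^ a ≠ 0 := fun h => hT0 ((cpow_eq_zero_iff _ _).mp h).1
  have hFc : ContDiffAt ℂ (n + 1) F w :=
    ((hF ▸ hf.mul_one_sub_conj_mul_cpow hw (-a)).contDiffOn isOpen_ball).contDiffAt
      (isOpen_ball.mem_nhds hw)
  have hf_eq : f =ᶠ[𝓝 w] fun z => (1 - conj w * z) ^ a * F z :=
    hF ▸ (one_sub_conj_mul_cpow_mul_eventuallyEq f hw a).symm
  have hTa : (((1 - ‖w‖ ^ 2) ^ (β + (n : ℝ)) : ℝ) : ℂ) = T ^ a := by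
    rw [ofReal_one_sub_norm_sq_rpow hw]
    push_cast
    rfl
  have hterm (i : ℕ) (hi : i ∈ range (n + 1)) :
      T ^ (n + 1) * ((n + 1).choose (i + 1) *
        ((-conj w) ^ (i + 1) * (descPochhammer ℂ (i + 1)).eval a * T ^ (a - ↑(i + 1)))
          * iteratedDeriv (n + 1 - (i + 1)) F w / T ^ a)
      = (-1) ^ (i + 1) * (n + 1).choose (i + 1) * (Gam β (n - i) n : ℂ) * conj w ^ (i + 1)
          * iteratedDeriv (n - i) F w * T ^ (n - i) := by
    have hi : i ≤ n := Nat.lt_succ_iff.mp (mem_range.mp hi)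
    rw [ofReal_Gam_sub_eq_descPochhammer_eval β hi, ← ha, cpow_sub _ _ hT0, cpow_natCast,
      Nat.add_sub_add_right, show T ^ (n + 1) = T ^ (i + 1) * T ^ (n - i) by
        rw [← pow_add]; congr 1; omega]
    field_simp
    ring
  simp only [ofReal_pow, ofReal_one_sub_norm_sq, ← hT]
  rw [hf_eq.iteratedDeriv_eq, iteratedDeriv_one_sub_mul_cpow_mul hTw a hFc, hTa,
    sum_range_succ', add_div, ← sum_congr rfl hterm, ← mul_sum, ← sum_div, ← hT]
  simp only [Nat.choose_zero_right, pow_zero, descPochhammer_zero, Polynomial.eval_one,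
    Nat.cast_zero, sub_zero, Nat.sub_zero, Nat.cast_one, one_mul, mul_one,
    mul_div_cancel_left₀ _ hTa0]
  ring

theorem stmt5 (β : ℝ) (hβ : 0 < β) (n : ℕ) (f : ℂ → ℂ)
    (hf : DifferentiableOn ℂ f (ball (0 : ℂ) 1)) (w : ℂ) (hw : w ∈ ball (0 : ℂ) 1)
    (F : ℂ → ℂ)
    (hF : F = fun z => f z * (1 - (starRingEnd ℂ) w * z) ^ (-((β : ℂ) + (n : ℂ)))) :
    (((1 - ‖w‖ ^ 2) ^ (n + 1) : ℝ) : ℂ) *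
        (iteratedDeriv (n + 1) F w
          - iteratedDeriv (n + 1) f w / (((1 - ‖w‖ ^ 2) ^ (β + (n : ℝ)) : ℝ) : ℂ))
      + ∑ i ∈ Finset.range (n + 1),
          (-1 : ℂ) ^ (i + 1) * ((n + 1).choose (i + 1) : ℂ) * ((Gam β (n - i) n : ℝ) : ℂ)
            * ((starRingEnd ℂ) w) ^ (i + 1) * iteratedDeriv (n - i) F w
            * (((1 - ‖w‖ ^ 2) ^ (n - i) : ℝ) : ℂ) = 0 :=
  stmt5_general β n f hf w hw F hF
end

section
/- Let $0 < p \le q < \infty$ with $2/p - 2/q \le 1$, let $\mu$ be a positive Borel measure on $\mathbb{D}$, and let $u_0, u_1$ be holomorphic on $\mathbb{D}$. Suppose there is $C > 0$ such that $\int_{\mathbb{D}} |u_0(z) f(z) + u_1(z) f'(z)|^q \, d\mu(z) \le C \|f\|_p^q$ for all $f \in A^p$. Then $\sup_{w \in \mathbb{D}} (1-|w|^2)^{-(1 + 2/p)q} \int_{D(w,r)} |u_1(z)|^q \, d\mu(z) < \infty$ for every $r > 0$, where $D(w,r)$ is the Bergman metric disc of center $w$ and radius $r$; i.e., $|u_1|^q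 d\mu$ is a $(1,p,q)$-Carleson measure. -/
open MeasureTheory Metric Complex Finset
open scoped ENNReal NNReal

/-- The pseudo-hyperbolic metric `ρ(z,w) = |(z-w)/(1-\bar w z)|`. -/
noncomputable def prho (z w : ℂ) : ℝ := ‖(z - w) / (1 - (starRingEnd ℂ) w * z)‖

/-- The Bergman metric `β(z,w)`. -/
noncomputable def bmetric (z w : ℂ) : ℝ :=
  (1 / 2) * Real.log ((1 + prho z w) / (1 - prho z w))

/-- The Bergman metric disc `D(w,r)`. -/
def bball (w : ℂ) (r : ℝ) : Set ℂ := {z | z ∈ ball (0 : ℂ) 1 ∧ bmetric z w < r}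

/-!
Test the hypothesis on `f = (1 - w̄z)⁻ⁿ` and `g = z (1 - w̄z)⁻⁽ⁿ⁺¹⁾` with `n p > 2`; a Forelli–Rudin
estimate gives `‖f‖_p ≲ (1 - |w|²)^(2/p - n)` and `‖g‖_p ≲ (1 - |w|²)^(2/p - n - 1)`.
For `F = u₀ f + u₁ f'` and `G = u₀ g + u₁ g'` one has
`f G - g F = u₁ (f g' - g f') = u₁ (1 - w̄z)⁻⁽²ⁿ⁺²⁾`, which eliminates `u₀`:
`|u₁| ≤ |1 - w̄z|ⁿ⁺¹ |F| + |1 - w̄z|ⁿ⁺² |G|`. On `D(w,r)` we have `|1 - w̄z| ≲ 1 - |w|²`, and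
integrating against `μ` gives the Carleson bound.
-/

open ComplexConjugate

lemma norm_one_sub_conj_mul_sq_sub_norm_sub_sq (z w : ℂ) :
    ‖1 - conj w * z‖ ^ 2 - ‖z - w‖ ^ 2 = (1 - ‖z‖ ^ 2) * (1 - ‖w‖ ^ 2) := by
  simp only [Complex.sq_norm]
  apply Complex.ofReal_injective
  push_cast [← Complex.mul_conj]
  simp only [map_sub, map_mul, map_one, Complex.conj_conj]
  ring

lemma one_sub_norm_mul_norm_le (z w : ℂ) : 1 - ‖w‖ * ‖z‖ ≤ ‖1 - conj w * z‖ := by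
  simpa [Complex.norm_conj] using norm_sub_norm_le (1 : ℂ) (conj w * z)

lemma norm_sub_le_norm_one_sub_conj_mul {z w : ℂ} (hz : ‖z‖ ≤ 1) (hw : ‖w‖ ≤ 1) :
    ‖z - w‖ ≤ ‖1 - conj w * z‖ := by
  have hid := norm_one_sub_conj_mul_sq_sub_norm_sub_sq z w
  have : 0 ≤ (1 - ‖z‖ ^ 2) * (1 - ‖w‖ ^ 2) :=
    mul_nonneg (by nlinarith [norm_nonneg z]) (by nlinarith [norm_nonneg w])
  exact (pow_le_pow_iff_left₀ (norm_nonneg _) (norm_nonneg _) two_ne_zero).mp (by linarith)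

lemma norm_one_sub_conj_mul_pos {z w : ℂ} (hz : ‖z‖ ≤ 1) (hw : ‖w‖ < 1) :
    0 < ‖1 - conj w * z‖ := by
  nlinarith [one_sub_norm_mul_norm_le z w, norm_nonneg z, norm_nonneg w]

lemma prho_nonneg (z w : ℂ) : 0 ≤ prho z w := norm_nonneg _

lemma prho_eq_div {z w : ℂ} : prho z w = ‖z - w‖ / ‖1 - conj w * z‖ := by
  rw [prho, norm_div]

lemma prho_lt_one {z w : ℂ} (hz : ‖z‖ < 1) (hw : ‖w‖ < 1) : prho z w < 1 := by
  have ht := norm_one_sub_conj_mul_pos hz.le hw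
  have hid := norm_one_sub_conj_mul_sq_sub_norm_sub_sq z w
  have : 0 < (1 - ‖z‖ ^ 2) * (1 - ‖w‖ ^ 2) :=
    mul_pos (by nlinarith [norm_nonneg z]) (by nlinarith [norm_nonneg w])
  rw [prho_eq_div, div_lt_one ht]
  exact (pow_lt_pow_iff_left₀ (norm_nonneg _) (norm_nonneg _) two_ne_zero).mp (by linarith)

lemma norm_one_sub_conj_mul_mul_one_sub_prho_sq_le {z w : ℂ} (hz : ‖z‖ < 1) (hw : ‖w‖ < 1) :
    ‖1 - conj w * z‖ * (1 - prho z w ^ 2) ≤ 2 * (1 - ‖w‖ ^ 2) := by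
  have ht := norm_one_sub_conj_mul_pos hz.le hw
  have hid := norm_one_sub_conj_mul_sq_sub_norm_sub_sq z w
  have hwz := one_sub_norm_mul_norm_le z w
  rw [prho_eq_div]
  generalize ‖1 - conj w * z‖ = t at *
  have key : t * (t * (1 - (‖z - w‖ / t) ^ 2)) = t ^ 2 - ‖z - w‖ ^ 2 := by field_simp
  have hzt : 1 - ‖z‖ ^ 2 ≤ 2 * t := by nlinarith [norm_nonneg z]
  have := mul_le_mul_of_nonneg_right hzt (by nlinarith [norm_nonneg w] : 0 ≤ 1 - ‖w‖ ^ 2)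
  nlinarith

lemma prho_lt_tanh_of_bmetric_lt {z w : ℂ} {r : ℝ} (hρ : prho z w < 1) (h : bmetric z w < r) :
    prho z w < Real.tanh r := by
  have hmem : prho z w ∈ Set.Ioo (-1) 1 := ⟨by linarith [prho_nonneg z w], hρ⟩
  rw [bmetric, ← Real.artanh_eq_half_log (Set.Ioo_subset_Icc_self hmem),
    ← Real.artanh_tanh r] at h
  exact (Real.artanh_lt_artanh_iff hmem ⟨Real.neg_one_lt_tanh r, Real.tanh_lt_one r⟩).mp h

lemma norm_one_sub_conj_mul_le_of_mem_bball {w z : ℂ} {r : ℝ} (hw : ‖w‖ < 1)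
    (hz : z ∈ bball w r) :
    ‖1 - conj w * z‖ ≤ 2 / (1 - Real.tanh r ^ 2) * (1 - ‖w‖ ^ 2) := by
  have hz1 : ‖z‖ < 1 := by simpa using hz.1
  have hρ := prho_lt_tanh_of_bmetric_lt (prho_lt_one hz1 hw) hz.2
  have htanh : 0 < 1 - Real.tanh r ^ 2 := by linarith [Real.tanh_sq_lt_one r]
  have hsq : prho z w ^ 2 < Real.tanh r ^ 2 :=
    pow_lt_pow_left₀ hρ (prho_nonneg z w) two_ne_zero
  rw [div_mul_eq_mul_div, le_div_iff₀ htanh]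
  nlinarith [norm_one_sub_conj_mul_mul_one_sub_prho_sq_le hz1 hw, norm_nonneg (1 - conj w * z)]

lemma lintegral_ofReal_add_norm_sub_rpow_neg {E : Type*} [NormedAddCommGroup E]
    [NormedSpace ℝ E] [FiniteDimensional ℝ E] [MeasurableSpace E] [BorelSpace E]
    (μ : Measure E) [μ.IsAddHaarMeasure] (x₀ : E) {δ : ℝ} (hδ : 0 < δ) (c : ℝ) :
    ∫⁻ x, ENNReal.ofReal ((δ + ‖x - x₀‖) ^ (-c)) ∂μ
      = ENNReal.ofReal (δ ^ ((Module.finrank ℝ E : ℝ) - c))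
        * ∫⁻ x, ENNReal.ofReal ((1 + ‖x‖) ^ (-c)) ∂μ := by
  rw [lintegral_sub_right_eq_self (fun x => ENNReal.ofReal ((δ + ‖x‖) ^ (-c))) x₀]
  have hscale : ∀ x : E, (δ + ‖x‖) ^ (-c) = δ ^ (-c) * (1 + ‖δ⁻¹ • x‖) ^ (-c) := by
    intro x
    rw [← Real.mul_rpow hδ.le (by positivity), norm_smul, Real.norm_of_nonneg (inv_nonneg.2 hδ.le)]
    field_simp
  simp_rw [hscale, ENNReal.ofReal_mul (Real.rpow_nonneg hδ.le _)]
  rw [lintegral_const_mul' _ _ ENNReal.ofReal_ne_top,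
    ← lintegral_map (f := fun x => ENNReal.ofReal ((1 + ‖x‖) ^ (-c))) (by fun_prop)
      (measurable_const_smul _),
    Measure.map_addHaar_smul μ (inv_ne_zero hδ.ne'), lintegral_smul_measure, smul_eq_mul,
    ← mul_assoc, ← ENNReal.ofReal_mul (by positivity)]
  congr 2
  rw [inv_pow, inv_inv, abs_of_pos (by positivity), Real.rpow_sub hδ, Real.rpow_neg hδ.le,
    Real.rpow_natCast]
  ring

lemma lintegral_dA_le (f : ℂ → ℝ≥0∞) :
    ∫⁻ z, f z ∂dA ≤ (ENNReal.ofReal Real.pi)⁻¹ * ∫⁻ z, f z := by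
  rw [dA, lintegral_smul_measure, smul_eq_mul]
  gcongr
  exact Measure.restrict_le_self

lemma ae_dA_mem_ball : ∀ᵐ z ∂dA, z ∈ ball (0 : ℂ) 1 :=
  Measure.ae_smul_measure (ae_restrict_mem measurableSet_ball) _

lemma norm_one_sub_conj_mul_rpow_neg_le {z w : ℂ} (hz : ‖z‖ ≤ 1) (hw : ‖w‖ < 1) {c : ℝ}
    (hc : 0 ≤ c) :
    ‖1 - conj w * z‖ ^ (-c) ≤ 2 ^ c * ((1 - ‖w‖ ^ 2) / 2 + ‖z - w‖) ^ (-c) := by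
  have hzw := norm_sub_le_norm_one_sub_conj_mul hz hw.le
  have hwz := one_sub_norm_mul_norm_le z w
  have hhalf : ((1 - ‖w‖ ^ 2) / 2 + ‖z - w‖) / 2 ≤ ‖1 - conj w * z‖ := by
    nlinarith [norm_nonneg w, norm_nonneg z]
  have hpos : 0 < ((1 - ‖w‖ ^ 2) / 2 + ‖z - w‖) / 2 := by
    nlinarith [norm_nonneg w, norm_nonneg (z - w)]
  calc _ ≤ (((1 - ‖w‖ ^ 2) / 2 + ‖z - w‖) / 2) ^ (-c) :=
        Real.rpow_le_rpow_of_nonpos hpos hhalf (neg_nonpos.2 hc)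
    _ = _ := by
        rw [Real.div_rpow (by linarith) zero_le_two, Real.rpow_neg zero_le_two]
        field_simp

/- A translation and a dilation reduce the integral to `∫ (1 + |x|)^(-c) < ∞`. -/
lemma exists_lintegral_norm_one_sub_conj_mul_rpow_neg_le {c : ℝ} (hc : 2 < c) :
    ∃ K : ℝ≥0∞, K ≠ ∞ ∧ ∀ w ∈ ball (0 : ℂ) 1,
      ∫⁻ z, ENNReal.ofReal (‖1 - conj w * z‖ ^ (-c)) ∂dA
        ≤ K * ENNReal.ofReal ((1 - ‖w‖ ^ 2) ^ (2 - c)) := by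
  set I := ∫⁻ x : ℂ, ENNReal.ofReal ((1 + ‖x‖) ^ (-c))
  have hI : I ≠ ∞ := (finite_integral_one_add_norm (by simpa using hc)).ne
  refine ⟨(ENNReal.ofReal Real.pi)⁻¹ * ENNReal.ofReal (2 ^ c * 2 ^ (c - 2)) * I, ?_, ?_⟩
  · have : (ENNReal.ofReal Real.pi)⁻¹ ≠ ∞ := by simp [Real.pi_pos]
    finiteness
  intro w hw
  have hw1 : ‖w‖ < 1 := by simpa using hw
  set s := 1 - ‖w‖ ^ 2
  have hs : 0 < s := by nlinarith [norm_nonneg w]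
  calc ∫⁻ z, ENNReal.ofReal (‖1 - conj w * z‖ ^ (-c)) ∂dA
      ≤ ∫⁻ z, ENNReal.ofReal (2 ^ c) * ENNReal.ofReal ((s / 2 + ‖z - w‖) ^ (-c)) ∂dA := by
        refine lintegral_mono_ae (ae_dA_mem_ball.mono fun z hz => ?_)
        rw [← ENNReal.ofReal_mul (by positivity)]
        exact ENNReal.ofReal_le_ofReal
          (norm_one_sub_conj_mul_rpow_neg_le (mem_ball_zero_iff.1 hz).le hw1 (by linarith))
    _ ≤ (ENNReal.ofReal Real.pi)⁻¹ *
          ∫⁻ z, ENNReal.ofReal (2 ^ c) * ENNReal.ofReal ((s / 2 + ‖z - w‖) ^ (-c)) :=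
        lintegral_dA_le _
    _ = (ENNReal.ofReal Real.pi)⁻¹ * (ENNReal.ofReal (2 ^ c) *
          (ENNReal.ofReal ((s / 2) ^ (2 - c)) * I)) := by
        rw [lintegral_const_mul' _ _ ENNReal.ofReal_ne_top,
          lintegral_ofReal_add_norm_sub_rpow_neg volume w (by positivity)]
        simp [I]
    _ = _ := by
        rw [Real.div_rpow hs.le zero_le_two, div_eq_mul_inv, ← Real.rpow_neg zero_le_two,
          neg_sub, ENNReal.ofReal_mul (by positivity), ENNReal.ofReal_mul (by positivity)]
        ring

/-- `(1 - |w|²)^(γ + i - 2/p) • testKernel w̄ i (γ + i)` is the normalized kernel `k_w^{[i]}`. -/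
noncomputable def testKernel (a : ℂ) (i m : ℕ) (z : ℂ) : ℂ := z ^ i * ((1 - a * z) ^ m)⁻¹

lemma hasDerivAt_inv_one_sub_mul_pow (a : ℂ) (m : ℕ) {z : ℂ} (hz : 1 - a * z ≠ 0) :
    HasDerivAt (fun y => ((1 - a * y) ^ m)⁻¹) (m * a * ((1 - a * z) ^ (m + 1))⁻¹) z := by
  have h1 : HasDerivAt (fun y : ℂ => 1 - a * y) (-a) z := by
    simpa using ((hasDerivAt_id z).const_mul a).const_sub 1
  refine ((h1.fun_pow m).inv (pow_ne_zero m hz)).congr_deriv ?_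
  rcases m with _ | m
  · simp
  · rw [Nat.add_sub_cancel]
    field_simp
    ring

lemma hasDerivAt_testKernel (a : ℂ) (i m : ℕ) {z : ℂ} (hz : 1 - a * z ≠ 0) :
    HasDerivAt (testKernel a i m)
      (i * z ^ (i - 1) * ((1 - a * z) ^ m)⁻¹ + z ^ i * (m * a * ((1 - a * z) ^ (m + 1))⁻¹)) z :=
  (hasDerivAt_pow i z).mul (hasDerivAt_inv_one_sub_mul_pow a m hz)

lemma testKernel_mul_deriv_sub_mul_deriv (a : ℂ) (n : ℕ) {z : ℂ} (hz : 1 - a * z ≠ 0) :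
    testKernel a 0 n z * deriv (testKernel a 1 (n + 1)) z
      - testKernel a 1 (n + 1) z * deriv (testKernel a 0 n) z
      = ((1 - a * z) ^ (2 * n + 2))⁻¹ := by
  rw [(hasDerivAt_testKernel a 1 (n + 1) hz).deriv, (hasDerivAt_testKernel a 0 n hz).deriv,
    testKernel, testKernel]
  field_simp
  push_cast
  ring

lemma norm_le_of_testKernel (u₀ u₁ : ℂ → ℂ) (a : ℂ) (n : ℕ) {z : ℂ} (hz : ‖z‖ ≤ 1)
    (h : 1 - a * z ≠ 0) :
    ‖u₁ z‖ ≤ ‖1 - a * z‖ ^ (n + 1)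
        * ‖u₀ z * testKernel a 0 n z + u₁ z * deriv (testKernel a 0 n) z‖
      + ‖1 - a * z‖ ^ (n + 2)
        * ‖u₀ z * testKernel a 1 (n + 1) z + u₁ z * deriv (testKernel a 1 (n + 1)) z‖ := by
  set f := testKernel a 0 n
  set g := testKernel a 1 (n + 1)
  set F := u₀ z * f z + u₁ z * deriv f z
  set G := u₀ z * g z + u₁ z * deriv g z
  have hW : u₁ z = (1 - a * z) ^ (2 * n + 2) * (f z * G - g z * F) := by
    rw [show f z * G - g z * F = u₁ z * (f z * deriv g z - g z * deriv f z) by ring,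
      testKernel_mul_deriv_sub_mul_deriv a n h]
    field_simp
  have ht : 0 < ‖1 - a * z‖ := norm_pos_iff.2 h
  have hf : ‖f z‖ = (‖1 - a * z‖ ^ n)⁻¹ := by simp [f, testKernel]
  have hg : ‖g z‖ ≤ (‖1 - a * z‖ ^ (n + 1))⁻¹ := by
    simpa [g, testKernel] using mul_le_of_le_one_left (by positivity) hz
  calc ‖u₁ z‖ = ‖1 - a * z‖ ^ (2 * n + 2) * ‖f z * G - g z * F‖ := by
        rw [hW, norm_mul, norm_pow]
    _ ≤ ‖1 - a * z‖ ^ (2 * n + 2) * ((‖1 - a * z‖ ^ n)⁻¹ * ‖G‖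
          + (‖1 - a * z‖ ^ (n + 1))⁻¹ * ‖F‖) := by
        gcongr
        refine (norm_sub_le _ _).trans ?_
        rw [norm_mul, norm_mul, hf]
        gcongr
    _ = _ := by
        field_simp
        ring

lemma exists_bnorm_testKernel_le {p : ℝ} (hp : 0 < p) (i : ℕ) {m : ℕ} (hm : 2 < m * p) :
    ∃ K : ℝ≥0∞, K ≠ ∞ ∧ ∀ w ∈ ball (0 : ℂ) 1,
      MemAp p (testKernel (conj w) i m) ∧
      Bnorm p (testKernel (conj w) i m) ≤ K * ENNReal.ofReal (1 - ‖w‖ ^ 2) ^ (2 / p - m) := by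
  obtain ⟨K, hK, hKw⟩ := exists_lintegral_norm_one_sub_conj_mul_rpow_neg_le hm
  refine ⟨K ^ (1 / p), by finiteness, fun w hw => ?_⟩
  have hw1 : ‖w‖ < 1 := by simpa using hw
  have hs : 0 < 1 - ‖w‖ ^ 2 := by nlinarith [norm_nonneg w]
  have hne : ∀ z ∈ ball (0 : ℂ) 1, 1 - conj w * z ≠ 0 := fun z hz =>
    norm_pos_iff.1 (norm_one_sub_conj_mul_pos (mem_ball_zero_iff.1 hz).le hw1)
  have hint : ∫⁻ z, (‖testKernel (conj w) i m z‖₊ : ℝ≥0∞) ^ p ∂dA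
      ≤ K * ENNReal.ofReal ((1 - ‖w‖ ^ 2) ^ (2 - m * p)) := by
    refine (lintegral_mono_ae (ae_dA_mem_ball.mono fun z hz => ?_)).trans (hKw w hw)
    rw [← enorm_eq_nnnorm, ← ofReal_norm, ENNReal.ofReal_rpow_of_nonneg (norm_nonneg _) hp.le]
    refine ENNReal.ofReal_le_ofReal ?_
    have hk : ‖testKernel (conj w) i m z‖ ≤ (‖1 - conj w * z‖ ^ m)⁻¹ := by
      simpa [testKernel] using mul_le_of_le_one_left (by positivity)
        (pow_le_one₀ (norm_nonneg z) (mem_ball_zero_iff.1 hz).le)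
    calc _ ≤ ((‖1 - conj w * z‖ ^ m)⁻¹) ^ p := Real.rpow_le_rpow (norm_nonneg _) hk hp.le
      _ = _ := by
          rw [Real.inv_rpow (by positivity), ← Real.rpow_natCast, ← Real.rpow_mul (norm_nonneg _),
            Real.rpow_neg (norm_nonneg _)]
  refine ⟨⟨fun z hz =>
    (hasDerivAt_testKernel _ i m (hne z hz)).differentiableAt.differentiableWithinAt,
    hint.trans_lt (by finiteness)⟩, ?_⟩
  calc Bnorm p (testKernel (conj w) i m)
      ≤ (K * ENNReal.ofReal ((1 - ‖w‖ ^ 2) ^ (2 - m * p))) ^ (1 / p) :=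
        ENNReal.rpow_le_rpow hint (by positivity)
    _ = _ := by
        rw [ENNReal.mul_rpow_of_nonneg _ _ (by positivity), ← ENNReal.ofReal_rpow_of_pos hs,
          ← ENNReal.rpow_mul]
        congr 2
        field_simp

lemma aemeasurable_mul_add_mul_deriv {U : Set ℂ} (hU : IsOpen U) (μ : Measure ℂ)
    {u₀ u₁ f : ℂ → ℂ} (hu₀ : DifferentiableOn ℂ u₀ U) (hu₁ : DifferentiableOn ℂ u₁ U)
    (hf : DifferentiableOn ℂ f U) :
    AEMeasurable (fun z => u₀ z * f z + u₁ z * deriv f z) (μ.restrict U) :=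
  ((hu₀.mul hf).add (hu₁.mul (hf.deriv hU))).continuousOn.aemeasurable hU.measurableSet

lemma setLIntegral_nnnorm_rpow_le_of_norm_le {α : Type*} [MeasurableSpace α] {μ : Measure α}
    {S T : Set α} (hST : S ⊆ T) {u F G : α → ℂ} (hF : AEMeasurable F (μ.restrict T))
    (hG : AEMeasurable G (μ.restrict T)) {a b q : ℝ} (ha : 0 ≤ a) (hb : 0 ≤ b) (hq : 0 ≤ q)
    (h : ∀ x ∈ S, ‖u x‖ ≤ a * ‖F x‖ + b * ‖G x‖) :
    ∫⁻ x in S, (‖u x‖₊ : ℝ≥0∞) ^ q ∂μ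
      ≤ 2 ^ q * (ENNReal.ofReal a ^ q * ∫⁻ x in T, (‖F x‖₊ : ℝ≥0∞) ^ q ∂μ
        + ENNReal.ofReal b ^ q * ∫⁻ x in T, (‖G x‖₊ : ℝ≥0∞) ^ q ∂μ) := by
  have hF' : AEMeasurable (fun x => (‖F x‖₊ : ℝ≥0∞) ^ q) (μ.restrict T) := by fun_prop
  have hG' : AEMeasurable (fun x => (‖G x‖₊ : ℝ≥0∞) ^ q) (μ.restrict T) := by fun_prop
  have hbound : AEMeasurable (fun x => 2 ^ q * (ENNReal.ofReal a ^ q * (‖F x‖₊ : ℝ≥0∞) ^ q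
      + ENNReal.ofReal b ^ q * (‖G x‖₊ : ℝ≥0∞) ^ q)) (μ.restrict T) := by fun_prop
  calc ∫⁻ x in S, (‖u x‖₊ : ℝ≥0∞) ^ q ∂μ
      ≤ ∫⁻ x in S, 2 ^ q * (ENNReal.ofReal a ^ q * (‖F x‖₊ : ℝ≥0∞) ^ q
          + ENNReal.ofReal b ^ q * (‖G x‖₊ : ℝ≥0∞) ^ q) ∂μ := by
        refine setLIntegral_mono_ae (hbound.mono_measure (Measure.restrict_mono hST le_rfl))
          (ae_of_all _ fun x hx => ?_)
        have hx := ENNReal.ofReal_le_ofReal (h x hx)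
        rw [ENNReal.ofReal_add (by positivity) (by positivity), ENNReal.ofReal_mul ha,
          ENNReal.ofReal_mul hb, ofReal_norm, ofReal_norm, ofReal_norm] at hx
        calc (‖u x‖₊ : ℝ≥0∞) ^ q ≤ (ENNReal.ofReal a * ‖F x‖ₑ + ENNReal.ofReal b * ‖G x‖ₑ) ^ q :=
              ENNReal.rpow_le_rpow hx hq
          _ ≤ _ := by
              refine (ENNReal.add_rpow_le_two_rpow_mul_rpow_add_rpow _ _ hq).trans_eq ?_
              rw [ENNReal.mul_rpow_of_nonneg _ _ hq, ENNReal.mul_rpow_of_nonneg _ _ hq]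
              rfl
    _ ≤ ∫⁻ x in T, 2 ^ q * (ENNReal.ofReal a ^ q * (‖F x‖₊ : ℝ≥0∞) ^ q
          + ENNReal.ofReal b ^ q * (‖G x‖₊ : ℝ≥0∞) ^ q) ∂μ := lintegral_mono_set hST
    _ = _ := by
        rw [lintegral_const_mul'' _ (by fun_prop), lintegral_add_left' (by fun_prop),
          lintegral_const_mul'' _ hF', lintegral_const_mul'' _ hG']

lemma norm_le_of_mem_bball_testKernel (u₀ u₁ : ℂ → ℂ) (n : ℕ) {w z : ℂ} {r : ℝ} (hw : ‖w‖ < 1)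
    (hz : z ∈ bball w r) :
    ‖u₁ z‖ ≤ (2 / (1 - Real.tanh r ^ 2) * (1 - ‖w‖ ^ 2)) ^ (n + 1)
        * ‖u₀ z * testKernel (conj w) 0 n z + u₁ z * deriv (testKernel (conj w) 0 n) z‖
      + (2 / (1 - Real.tanh r ^ 2) * (1 - ‖w‖ ^ 2)) ^ (n + 2)
        * ‖u₀ z * testKernel (conj w) 1 (n + 1) z
          + u₁ z * deriv (testKernel (conj w) 1 (n + 1)) z‖ := by
  have hz1 : ‖z‖ < 1 := by simpa using hz.1
  have ht := norm_one_sub_conj_mul_pos hz1.le hw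
  have hκ := norm_one_sub_conj_mul_le_of_mem_bball hw hz
  refine (norm_le_of_testKernel u₀ u₁ (conj w) n hz1.le (norm_pos_iff.1 ht)).trans ?_
  gcongr

lemma ofReal_mul_pow_succ_rpow_mul {κ s : ℝ} (hκ : 0 ≤ κ) (hs : 0 < s) {q : ℝ} (hq : 0 ≤ q)
    (k : ℕ) (K : ℝ≥0∞) (x : ℝ) :
    ENNReal.ofReal ((κ * s) ^ (k + 1)) ^ q * (K * ENNReal.ofReal s ^ (x - k)) ^ q
      = (ENNReal.ofReal κ ^ (k + 1) * K) ^ q * (ENNReal.ofReal s ^ (1 + x)) ^ q := by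
  have hσ : ENNReal.ofReal s ≠ 0 := by simpa using hs
  have hexp : 1 + x = (k + 1 : ℕ) + (x - k) := by push_cast; ring
  rw [ENNReal.ofReal_pow (by positivity), ENNReal.ofReal_mul hκ, mul_pow, hexp,
    ENNReal.rpow_add _ _ hσ ENNReal.ofReal_ne_top, ENNReal.rpow_natCast]
  simp only [ENNReal.mul_rpow_of_nonneg _ _ hq]
  ring

lemma setLIntegral_bball_le_of_bnorm_testKernel_le {p q : ℝ} (hq : 0 ≤ q) {μ : Measure ℂ}
    {u₀ u₁ : ℂ → ℂ} (hu₀ : DifferentiableOn ℂ u₀ (ball (0 : ℂ) 1))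
    (hu₁ : DifferentiableOn ℂ u₁ (ball (0 : ℂ) 1))
    {C : ℝ≥0} (hcar : ∀ f : ℂ → ℂ, MemAp p f →
      ∫⁻ z in ball (0 : ℂ) 1, (‖u₀ z * f z + u₁ z * deriv f z‖₊ : ℝ≥0∞) ^ q ∂μ
        ≤ (C : ℝ≥0∞) * (Bnorm p f) ^ q)
    {n : ℕ} {K₀ K₁ : ℝ≥0∞} {w : ℂ} (hw : ‖w‖ < 1) (r : ℝ)
    (hf : MemAp p (testKernel (conj w) 0 n))
    (hfK : Bnorm p (testKernel (conj w) 0 n) ≤ K₀ * ENNReal.ofReal (1 - ‖w‖ ^ 2) ^ (2 / p - n))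
    (hg : MemAp p (testKernel (conj w) 1 (n + 1)))
    (hgK : Bnorm p (testKernel (conj w) 1 (n + 1))
      ≤ K₁ * ENNReal.ofReal (1 - ‖w‖ ^ 2) ^ (2 / p - (n + 1 : ℕ))) :
    ∫⁻ z in bball w r, (‖u₁ z‖₊ : ℝ≥0∞) ^ q ∂μ
      ≤ 2 ^ q * C * ((ENNReal.ofReal (2 / (1 - Real.tanh r ^ 2)) ^ (n + 1) * K₀) ^ q
          + (ENNReal.ofReal (2 / (1 - Real.tanh r ^ 2)) ^ (n + 1 + 1) * K₁) ^ q)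
        * (ENNReal.ofReal (1 - ‖w‖ ^ 2) ^ (1 + 2 / p)) ^ q := by
  set κ := 2 / (1 - Real.tanh r ^ 2)
  have hκ : 0 < κ := div_pos two_pos (by linarith [Real.tanh_sq_lt_one r])
  have hs : 0 < 1 - ‖w‖ ^ 2 := by nlinarith [norm_nonneg w]
  calc ∫⁻ z in bball w r, (‖u₁ z‖₊ : ℝ≥0∞) ^ q ∂μ
      ≤ 2 ^ q * (ENNReal.ofReal ((κ * (1 - ‖w‖ ^ 2)) ^ (n + 1)) ^ q
            * ∫⁻ z in ball 0 1, (‖u₀ z * testKernel (conj w) 0 n z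
              + u₁ z * deriv (testKernel (conj w) 0 n) z‖₊ : ℝ≥0∞) ^ q ∂μ
          + ENNReal.ofReal ((κ * (1 - ‖w‖ ^ 2)) ^ (n + 1 + 1)) ^ q
            * ∫⁻ z in ball 0 1, (‖u₀ z * testKernel (conj w) 1 (n + 1) z
              + u₁ z * deriv (testKernel (conj w) 1 (n + 1)) z‖₊ : ℝ≥0∞) ^ q ∂μ) :=
        setLIntegral_nnnorm_rpow_le_of_norm_le (fun z hz => hz.1)
          (aemeasurable_mul_add_mul_deriv isOpen_ball μ hu₀ hu₁ hf.1)
          (aemeasurable_mul_add_mul_deriv isOpen_ball μ hu₀ hu₁ hg.1)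
          (by positivity) (by positivity) hq
          (fun z hz => norm_le_of_mem_bball_testKernel u₀ u₁ n hw hz)
    _ ≤ 2 ^ q * (ENNReal.ofReal ((κ * (1 - ‖w‖ ^ 2)) ^ (n + 1)) ^ q
            * (C * (K₀ * ENNReal.ofReal (1 - ‖w‖ ^ 2) ^ (2 / p - n)) ^ q)
          + ENNReal.ofReal ((κ * (1 - ‖w‖ ^ 2)) ^ (n + 1 + 1)) ^ q
            * (C * (K₁ * ENNReal.ofReal (1 - ‖w‖ ^ 2) ^ (2 / p - (n + 1 : ℕ))) ^ q)) := by
        gcongr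
        · exact (hcar _ hf).trans (by gcongr)
        · exact (hcar _ hg).trans (by gcongr)
    _ = _ := by
        rw [mul_left_comm _ (C : ℝ≥0∞), ofReal_mul_pow_succ_rpow_mul hκ.le hs hq,
          mul_left_comm _ (C : ℝ≥0∞), ofReal_mul_pow_succ_rpow_mul hκ.le hs hq]
        ring

theorem stmt7_general (p q : ℝ) (hp : 0 < p) (hpq : p ≤ q)
    (μ : Measure ℂ) (u₀ u₁ : ℂ → ℂ)
    (hu₀ : DifferentiableOn ℂ u₀ (ball (0 : ℂ) 1))
    (hu₁ : DifferentiableOn ℂ u₁ (ball (0 : ℂ) 1))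
    (C : ℝ≥0) (hcar : ∀ f : ℂ → ℂ, MemAp p f →
      ∫⁻ z in ball (0 : ℂ) 1,
          (‖u₀ z * f z + u₁ z * deriv f z‖₊ : ℝ≥0∞) ^ q ∂μ
        ≤ (C : ℝ≥0∞) * (Bnorm p f) ^ q) :
    ∀ r : ℝ, 0 < r → ∃ M : ℝ≥0, ∀ w ∈ ball (0 : ℂ) 1,
      ∫⁻ z in bball w r, (‖u₁ z‖₊ : ℝ≥0∞) ^ q ∂μ
        ≤ (M : ℝ≥0∞) * ENNReal.ofReal ((1 - ‖w‖ ^ 2) ^ ((1 + 2 / p) * q)) := by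
  intro r _
  have hq : 0 ≤ q := hp.le.trans hpq
  obtain ⟨n, hn⟩ : ∃ n : ℕ, 2 / p < n := exists_nat_gt _
  have hn₀ : 2 < n * p := (div_lt_iff₀ hp).1 hn
  have hn₁ : 2 < ((n + 1 : ℕ) : ℝ) * p := by push_cast; nlinarith
  obtain ⟨K₀, hK₀, hf⟩ := exists_bnorm_testKernel_le hp 0 hn₀
  obtain ⟨K₁, hK₁, hg⟩ := exists_bnorm_testKernel_le hp 1 hn₁
  refine ⟨(2 ^ q * C * ((ENNReal.ofReal (2 / (1 - Real.tanh r ^ 2)) ^ (n + 1) * K₀) ^ q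
    + (ENNReal.ofReal (2 / (1 - Real.tanh r ^ 2)) ^ (n + 1 + 1) * K₁) ^ q)).toNNReal,
    fun w hw => ?_⟩
  have hs : 0 < 1 - ‖w‖ ^ 2 := by nlinarith [mem_ball_zero_iff.1 hw, norm_nonneg w]
  rw [ENNReal.coe_toNNReal (by finiteness), ← ENNReal.ofReal_rpow_of_pos hs, ENNReal.rpow_mul]
  exact setLIntegral_bball_le_of_bnorm_testKernel_le hq hu₀ hu₁ hcar (mem_ball_zero_iff.1 hw) r
    (hf w hw).1 (hf w hw).2 (hg w hw).1 (hg w hw).2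

theorem stmt7 (p q : ℝ) (hp : 0 < p) (hpq : p ≤ q) (hpq1 : 2 / p - 2 / q ≤ 1)
    (μ : Measure ℂ) (u₀ u₁ : ℂ → ℂ)
    (hu₀ : DifferentiableOn ℂ u₀ (ball (0 : ℂ) 1))
    (hu₁ : DifferentiableOn ℂ u₁ (ball (0 : ℂ) 1))
    (C : ℝ≥0) (hcar : ∀ f : ℂ → ℂ, MemAp p f →
      ∫⁻ z in ball (0 : ℂ) 1,
          (‖u₀ z * f z + u₁ z * deriv f z‖₊ : ℝ≥0∞) ^ q ∂μ
        ≤ (C : ℝ≥0∞) * (Bnorm p f) ^ q) :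
    ∀ r : ℝ, 0 < r → ∃ M : ℝ≥0, ∀ w ∈ ball (0 : ℂ) 1,
      ∫⁻ z in bball w r, (‖u₁ z‖₊ : ℝ≥0∞) ^ q ∂μ
        ≤ (M : ℝ≥0∞) * ENNReal.ofReal ((1 - ‖w‖ ^ 2) ^ ((1 + 2 / p) * q)) :=
  stmt7_general p q hp hpq μ u₀ u₁ hu₀ hu₁ C hcar
end

section
/- Let $n \ge 1$, let $g_0, \dots, g_{n-1}$ be holomorphic on $\mathbb{D}$, and let $\lambda \in \mathbb{C} \setminus \{0\}$. If $f$ is holomorphic on $\mathbb{D}$ and satisfies $I^n\!\left( f g_0 + f' g_1 + \cdots + f^{(n-1)} g_{n-1} \right) = \lambda f$ on $\mathbb{D}$, then $f = 0$. In other words, the operator $I_{\mathbf{g}}^{(n)}$ has no nonzero eigenvalues on $H(\mathbb{D})$. -/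
/-!
If `f` vanishes to order `m` at `0`, then `f⁽ᵏ⁾ g_k` vanishes to order at least `m - k`, so the
sum `∑_{k<n} f⁽ᵏ⁾ g_k` vanishes to order at least `m + 1 - n`. On a disc `I u` is the primitive of
`u` vanishing at `0`, so `I` raises the order of vanishing at `0` by exactly one, and
`I^n (∑_{k<n} f⁽ᵏ⁾ g_k)` vanishes to order at least `m + 1`, whereas `λ f` vanishes to order
exactly `m`. Hence `f` vanishes to infinite order at `0`, and `f = 0` by the identity theorem.
-/

open MeasureTheory Metric Complex Finset

/-- The integration operator `(If)(z) = ∫_0^z f(w) dw = z ∫_0^1 f(tz) dt`. -/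
noncomputable def Iop (f : ℂ → ℂ) (z : ℂ) : ℂ := z * ∫ t in (0 : ℝ)..1, f ((t : ℂ) * z)

open Filter Topology

section AnalyticOrder

variable {𝕜 E : Type*} [NontriviallyNormedField 𝕜] [NormedAddCommGroup E] [NormedSpace 𝕜 E]
  {x : 𝕜}

lemma le_analyticOrderAt_sum {ι : Type*} {s : Finset ι} {F : ι → 𝕜 → E} {m : ℕ∞}
    (h : ∀ i ∈ s, m ≤ analyticOrderAt (F i) x) :
    m ≤ analyticOrderAt (fun z => ∑ i ∈ s, F i z) x := by
  classical
  induction s using Finset.induction_on with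
  | empty =>
    rw [analyticOrderAt_eq_top.mpr (Eventually.of_forall fun _ => sum_empty)]
    exact le_top
  | insert a s ha ih =>
    simp only [Finset.sum_insert ha]
    exact (le_min (h a (mem_insert_self a s)) (ih fun i hi => h i (mem_insert_of_mem hi))).trans
      (le_analyticOrderAt_add (f := F a) (g := fun z => ∑ i ∈ s, F i z))

lemma AnalyticAt.analyticOrderAt_le_mul {f g : 𝕜 → 𝕜} (hf : AnalyticAt 𝕜 f x)
    (hg : AnalyticAt 𝕜 g x) : analyticOrderAt f x ≤ analyticOrderAt (f * g) x := by
  rw [analyticOrderAt_mul hf hg]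
  exact le_self_add

variable [CompleteSpace E] {f : 𝕜 → E}

lemma AnalyticAt.analyticAt_iteratedDeriv (hf : AnalyticAt 𝕜 f x) (k : ℕ) :
    AnalyticAt 𝕜 (iteratedDeriv k f) x :=
  iteratedDeriv_eq_iterate (f := f) ▸ hf.iterated_deriv k

variable [CharZero 𝕜]

lemma AnalyticAt.analyticOrderAt_le_deriv_add_one (hf : AnalyticAt 𝕜 f x) :
    analyticOrderAt f x ≤ analyticOrderAt (deriv f) x + 1 := by
  by_cases hfx : f x = 0
  · simp [hf.analyticOrderAt_deriv_add_one, hfx]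
  · simp [analyticOrderAt_eq_zero.mpr (.inr hfx)]

lemma AnalyticAt.analyticOrderAt_le_iteratedDeriv_add (hf : AnalyticAt 𝕜 f x) (k : ℕ) :
    analyticOrderAt f x ≤ analyticOrderAt (iteratedDeriv k f) x + k := by
  induction k with
  | zero => simp
  | succ k ih =>
    calc analyticOrderAt f x ≤ analyticOrderAt (iteratedDeriv k f) x + k := ih
      _ ≤ analyticOrderAt (iteratedDeriv (k + 1) f) x + 1 + k := by
        rw [iteratedDeriv_succ]; gcongr; exact (hf.analyticAt_iteratedDeriv k).analyticOrderAt_le_deriv_add_one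
      _ = analyticOrderAt (iteratedDeriv (k + 1) f) x + ↑(k + 1) := by push_cast; ring

end AnalyticOrder

lemma analyticOrderAt_add_one_le_sum_iteratedDeriv_mul {𝕜 : Type*} [NontriviallyNormedField 𝕜]
    [CharZero 𝕜] [CompleteSpace 𝕜] {f : 𝕜 → 𝕜} {g : ℕ → 𝕜 → 𝕜} {x : 𝕜} {n : ℕ}
    (hf : AnalyticAt 𝕜 f x) (hg : ∀ k < n, AnalyticAt 𝕜 (g k) x) :
    analyticOrderAt f x + 1 ≤
      analyticOrderAt (fun z => ∑ k ∈ range n, iteratedDeriv k f z * g k z) x + n := by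
  rw [← tsub_le_iff_right]
  refine le_analyticOrderAt_sum fun k hk => ?_
  rw [tsub_le_iff_right]
  have hkn : k + 1 ≤ n := mem_range.mp hk
  calc analyticOrderAt f x + 1 ≤ analyticOrderAt (iteratedDeriv k f) x + k + 1 := by
        gcongr; exact hf.analyticOrderAt_le_iteratedDeriv_add k
    _ ≤ analyticOrderAt (iteratedDeriv k f * g k) x + n := by
        rw [add_assoc]
        gcongr
        · exact (hf.analyticAt_iteratedDeriv k).analyticOrderAt_le_mul (hg k (by omega))
        · exact_mod_cast hkn

section Integration

variable {u F : ℂ → ℂ} {r : ℝ}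

lemma iop_zero (u : ℂ → ℂ) : Iop u 0 = 0 := by simp [Iop]

lemma iop_eq_sub_of_hasDerivAt (hu : ContinuousOn u (ball 0 r))
    (hF : ∀ z ∈ ball (0 : ℂ) r, HasDerivAt F (u z) z) {z : ℂ} (hz : z ∈ ball (0 : ℂ) r) :
    Iop u z = F z - F 0 := by
  have hseg : ∀ t ∈ Set.uIcc (0 : ℝ) 1, (t : ℂ) * z ∈ ball (0 : ℂ) r := by
    intro t ht
    rw [Set.uIcc_of_le zero_le_one] at ht
    simpa [Complex.real_smul] using
      (convex_ball (0 : ℂ) r).smul_mem_of_zero_mem (mem_ball_self (pos_of_mem_ball hz)) hz ht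
  have hderiv : ∀ t ∈ Set.uIcc (0 : ℝ) 1,
      HasDerivAt (fun s : ℝ => F (s * z)) (u (t * z) * z) t := fun t ht =>
    ((hF _ (hseg t ht)).comp (t : ℂ) (hasDerivAt_mul_const z)).comp_ofReal
  have hcont : ContinuousOn (fun t : ℝ => u (t * z) * z) (Set.uIcc 0 1) :=
    (hu.comp (by fun_prop) hseg).mul continuousOn_const
  have hftc := intervalIntegral.integral_eq_sub_of_hasDerivAt hderiv hcont.intervalIntegrable
  rw [intervalIntegral.integral_mul_const] at hftc
  simp only [ofReal_one, one_mul, ofReal_zero, zero_mul] at hftc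
  rw [Iop, mul_comm, hftc]

lemma hasDerivAt_iop (hu : DifferentiableOn ℂ u (ball 0 r)) {z : ℂ} (hz : z ∈ ball (0 : ℂ) r) :
    HasDerivAt (Iop u) (u z) z := by
  obtain ⟨F, hF⟩ := hu.isExactOn_ball
  have hIop : Iop u =ᶠ[𝓝 z] fun w => F w - F 0 :=
    eventually_of_mem (isOpen_ball.mem_nhds hz) fun w hw =>
      iop_eq_sub_of_hasDerivAt hu.continuousOn hF hw
  exact ((hF z hz).sub_const (F 0)).congr_of_eventuallyEq hIop

lemma differentiableOn_iop (hu : DifferentiableOn ℂ u (ball 0 r)) :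
    DifferentiableOn ℂ (Iop u) (ball 0 r) := fun _ hz =>
  (hasDerivAt_iop hu hz).differentiableAt.differentiableWithinAt

lemma differentiableOn_iop_iterate (hu : DifferentiableOn ℂ u (ball 0 r)) (j : ℕ) :
    DifferentiableOn ℂ (Iop^[j] u) (ball 0 r) := by
  induction j with
  | zero => exact hu
  | succ j ih => rw [Function.iterate_succ_apply']; exact differentiableOn_iop ih

lemma analyticOrderAt_iop (hu : DifferentiableOn ℂ u (ball 0 r)) (hr : 0 < r) :
    analyticOrderAt (Iop u) 0 = analyticOrderAt u 0 + 1 := by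
  have h0 : ball (0 : ℂ) r ∈ 𝓝 0 := ball_mem_nhds 0 hr
  have hderiv : deriv (Iop u) =ᶠ[𝓝 0] u :=
    eventually_of_mem h0 fun z hz => (hasDerivAt_iop hu hz).deriv
  have := ((differentiableOn_iop hu).analyticAt h0).analyticOrderAt_deriv_add_one
  simpa [analyticOrderAt_congr hderiv, iop_zero] using this.symm

lemma analyticOrderAt_iop_iterate (hu : DifferentiableOn ℂ u (ball 0 r)) (hr : 0 < r) (j : ℕ) :
    analyticOrderAt (Iop^[j] u) 0 = analyticOrderAt u 0 + j := by
  induction j with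
  | zero => simp
  | succ j ih =>
    rw [Function.iterate_succ_apply', analyticOrderAt_iop (differentiableOn_iop_iterate hu j) hr,
      ih]
    push_cast
    ring

end Integration

theorem stmt13_general (n : ℕ) (g : ℕ → ℂ → ℂ)
    (hg : ∀ k < n, DifferentiableOn ℂ (g k) (ball (0 : ℂ) 1))
    (lam : ℂ) (hlam : lam ≠ 0) (f : ℂ → ℂ)
    (hf : DifferentiableOn ℂ f (ball (0 : ℂ) 1))
    (heq : ∀ z ∈ ball (0 : ℂ) 1,
      Iop^[n] (fun w => ∑ k ∈ Finset.range n, iteratedDeriv k f w * g k w) z = lam * f z) :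
    ∀ z ∈ ball (0 : ℂ) 1, f z = 0 := by
  set h := fun w => ∑ k ∈ Finset.range n, iteratedDeriv k f w * g k w
  have h0 : ball (0 : ℂ) 1 ∈ 𝓝 0 := ball_mem_nhds 0 one_pos
  have hfa : AnalyticOnNhd ℂ f (ball 0 1) := hf.analyticOnNhd isOpen_ball
  have hh : DifferentiableOn ℂ h (ball 0 1) := by
    simp only [h, iteratedDeriv_eq_iterate]
    exact DifferentiableOn.fun_sum fun k hk =>
      (hfa.iterated_deriv k).differentiableOn.fun_mul (hg k (mem_range.mp hk))
  have hf0 : AnalyticAt ℂ f 0 := hfa 0 (mem_ball_self one_pos)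
  have hconst : analyticOrderAt (fun _ : ℂ => lam) 0 = 0 := analyticOrderAt_eq_zero.mpr (.inr hlam)
  have hIn : analyticOrderAt (Iop^[n] h) 0 = analyticOrderAt f 0 := by
    rw [analyticOrderAt_congr (eventually_of_mem h0 heq)]
    exact (analyticOrderAt_mul analyticAt_const hf0).trans (by rw [hconst, zero_add])
  have hle : analyticOrderAt f 0 + 1 ≤ analyticOrderAt h 0 + n :=
    analyticOrderAt_add_one_le_sum_iteratedDeriv_mul hf0 fun k hk => (hg k hk).analyticAt h0
  have htop : analyticOrderAt f 0 = ⊤ := by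
    rw [← analyticOrderAt_iop_iterate hh one_pos, hIn] at hle
    by_contra hne
    exact ((ENat.add_one_le_iff hne).mp hle).false
  exact hfa.eqOn_zero_of_preconnected_of_eventuallyEq_zero (convex_ball 0 1).isPreconnected
    (mem_ball_self one_pos) (analyticOrderAt_eq_top.mp htop)

theorem stmt13 (n : ℕ) (hn : 1 ≤ n) (g : ℕ → ℂ → ℂ)
    (hg : ∀ k < n, DifferentiableOn ℂ (g k) (ball (0 : ℂ) 1))
    (lam : ℂ) (hlam : lam ≠ 0) (f : ℂ → ℂ)
    (hf : DifferentiableOn ℂ f (ball (0 : ℂ) 1))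
    (heq : ∀ z ∈ ball (0 : ℂ) 1,
      Iop^[n] (fun w => ∑ k ∈ Finset.range n, iteratedDeriv k f w * g k w) z = lam * f z) :
    ∀ z ∈ ball (0 : ℂ) 1, f z = 0 :=
  stmt13_general n g hg lam hlam f hf heq
end
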